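/- arXiv:2511.14653 — 7 statements merged into one kernel-verified Lean document; each statement's English description precedes it below -/
import Mathlib

section
/- Let n ≥ 1 and let M be an n×n real orthogonal matrix partitioned in blocks as [[A, B], [C, D]] where A is a k×k block. If I - A is invertible, then the matrix D + C(I - A)⁻¹B is orthogonal. -/
open Matrix

theorem stmt_0 {k m : ℕ} (hn : 1 ≤ k + m)
    (A : Matrix (Fin k) (Fin k) ℝ) (B : Matrix (Fin k) (Fin m) ℝ)
    (C : Matrix (Fin m) (Fin k) ℝ) (D : Matrix (Fin m) (Fin m) ℝ)
    (hM : (Matrix.fromBlocks A B C D)ᵀ * Matrix.fromBlocks A B C D = 1)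
    (hA : IsUnit (1 - A)) :
    (D + C * (1 - A)⁻¹ * B)ᵀ * (D + C * (1 - A)⁻¹ * B) = 1 := by
  rw [fromBlocks_transpose, fromBlocks_multiply, ← fromBlocks_one] at hM
  have h1 : Aᵀ * A + Cᵀ * C = 1 := congrArg Matrix.toBlocks₁₁ hM
  have h2 : Aᵀ * B + Cᵀ * D = 0 := congrArg Matrix.toBlocks₁₂ hM
  have h3 : Bᵀ * A + Dᵀ * C = 0 := congrArg Matrix.toBlocks₂₁ hM
  have h4 : Bᵀ * B + Dᵀ * D = 1 := congrArg Matrix.toBlocks₂₂ hM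
  have hd : IsUnit (1 - A).det := (isUnit_iff_isUnit_det _).mp hA
  set S := (1 - A)⁻¹ with hSdef
  have hS1 : (1 - A) * S = 1 := mul_nonsing_inv _ hd
  have hS2 : S * (1 - A) = 1 := nonsing_inv_mul _ hd
  have hS4 : Sᵀ * (1 - A)ᵀ = 1 := by
    have := congrArg Matrix.transpose hS1
    simpa [transpose_mul] using this
  have hCC : Cᵀ * C = (1 - A)ᵀ + Aᵀ * (1 - A) := by
    have h : Cᵀ * C = 1 - Aᵀ * A := by
      rw [← h1]; abel
    rw [h, transpose_sub, transpose_one, mul_sub, mul_one]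
    abel
  have key : Sᵀ * (Cᵀ * C) * S = S + Sᵀ * Aᵀ := by
    rw [hCC, mul_add, add_mul, hS4, one_mul]
    congr 1
    rw [show Sᵀ * (Aᵀ * (1 - A)) * S = Sᵀ * Aᵀ * ((1 - A) * S) by
      simp only [mul_assoc], hS1, mul_one]
  have hCD : Cᵀ * D = -(Aᵀ * B) := by
    rw [add_comm] at h2; exact eq_neg_of_add_eq_zero_left h2
  have hDC : Dᵀ * C = -(Bᵀ * A) := by
    rw [add_comm] at h3; exact eq_neg_of_add_eq_zero_left h3
  calc (D + C * S * B)ᵀ * (D + C * S * B)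
      = Dᵀ * D + (Dᵀ * C) * S * B + Bᵀ * Sᵀ * (Cᵀ * D) + Bᵀ * (Sᵀ * (Cᵀ * C) * S) * B := by
        simp only [transpose_add, transpose_mul, Matrix.add_mul, Matrix.mul_add,
          Matrix.mul_assoc]
        abel
    _ = Dᵀ * D + Bᵀ * ((1 - A) * S) * B := by
        rw [hCD, hDC, key]
        simp only [Matrix.mul_add, Matrix.add_mul, Matrix.mul_neg, Matrix.neg_mul,
          Matrix.sub_mul, Matrix.mul_sub, Matrix.one_mul, Matrix.mul_assoc]
        abel
    _ = 1 := by rw [hS1, Matrix.mul_one, ← h4]; abel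
end

section
/- Let M = fromBlocks A B C D be an orthogonal real matrix with A a k×k block, and suppose I - A is invertible. Then for every vector u, the vector x = (I - A)⁻¹ B u satisfies ‖x‖² + ‖(D + C(I-A)⁻¹B)u‖² = ‖x‖² + ‖u‖², and consequently ‖(D + C(I-A)⁻¹B)u‖ = ‖u‖. -/
open Matrix

theorem stmt_1 {k m : ℕ}
    (A : Matrix (Fin k) (Fin k) ℝ) (B : Matrix (Fin k) (Fin m) ℝ)
    (C : Matrix (Fin m) (Fin k) ℝ) (D : Matrix (Fin m) (Fin m) ℝ)
    (hM : (Matrix.fromBlocks A B C D)ᵀ * Matrix.fromBlocks A B C D = 1)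
    (hA : IsUnit (1 - A)) (u : Fin m → ℝ) :
    (∑ i, ((1 - A)⁻¹ *ᵥ (B *ᵥ u)) i ^ 2)
        + ∑ i, ((D + C * (1 - A)⁻¹ * B) *ᵥ u) i ^ 2
      = (∑ i, ((1 - A)⁻¹ *ᵥ (B *ᵥ u)) i ^ 2) + ∑ i, u i ^ 2
    ∧ Real.sqrt (∑ i, ((D + C * (1 - A)⁻¹ * B) *ᵥ u) i ^ 2)
      = Real.sqrt (∑ i, u i ^ 2) := by
  have hdet : IsUnit (1 - A).det := (Matrix.isUnit_iff_isUnit_det _).mp hA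
  set x := (1 - A)⁻¹ *ᵥ (B *ᵥ u) with hx
  have h1 : A *ᵥ x + B *ᵥ u = x := by
    have h : (1 - A) *ᵥ x = B *ᵥ u := by
      rw [hx, Matrix.mulVec_mulVec, Matrix.mul_nonsing_inv _ hdet, Matrix.one_mulVec]
    rw [Matrix.sub_mulVec, Matrix.one_mulVec] at h
    funext i
    have := congrFun h i
    simp only [Pi.sub_apply, Pi.add_apply] at this ⊢
    linarith
  have h2 : C *ᵥ x + D *ᵥ u = (D + C * (1 - A)⁻¹ * B) *ᵥ u := by
    rw [Matrix.add_mulVec, ← Matrix.mulVec_mulVec, ← Matrix.mulVec_mulVec, ← hx,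
      add_comm]
  set v : Fin k ⊕ Fin m → ℝ := Sum.elim x u with hv
  have hMv : Matrix.fromBlocks A B C D *ᵥ v = Sum.elim x ((D + C * (1 - A)⁻¹ * B) *ᵥ u) := by
    simp only [hv, Matrix.fromBlocks_mulVec, Sum.elim_comp_inl, Sum.elim_comp_inr, h1, h2]
  have hnorm : (Matrix.fromBlocks A B C D *ᵥ v) ⬝ᵥ (Matrix.fromBlocks A B C D *ᵥ v)
      = v ⬝ᵥ v := by
    rw [Matrix.dotProduct_mulVec, ← Matrix.vecMul_transpose, Matrix.vecMul_vecMul, hM]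
    simp
  rw [hMv] at hnorm
  have key : (∑ i, x i ^ 2) + ∑ i, ((D + C * (1 - A)⁻¹ * B) *ᵥ u) i ^ 2
      = (∑ i, x i ^ 2) + ∑ i, u i ^ 2 := by
    have := hnorm
    simp only [hv, dotProduct, Sum.elim_inl, Sum.elim_inr, Fintype.sum_sum_type,
      ← sq] at this
    linarith
  refine ⟨key, ?_⟩
  congr 1
  linarith
end

section
/- There exist three pairwise orthogonal vectors in {±1}ⁿ if and only if n is a positive multiple of 4. -/
lemma sum_period4 (k : ℕ) (F : ℕ → ℝ) (hF : ∀ x, F (x % 4) = F x) :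
    ∑ i : Fin (k * 4), F i = k * (F 0 + F 1 + F 2 + F 3) := by
  have h4 : ∑ j : Fin 4, F j = F 0 + F 1 + F 2 + F 3 := by
    rw [Fin.sum_univ_four]
    have h3 : ((3 : Fin 4) : ℕ) = 3 := rfl
    rw [h3]; norm_num
  rw [← h4]
  rw [← Equiv.sum_comp (finProdFinEquiv : Fin k × Fin 4 ≃ Fin (k * 4))
      (fun i : Fin (k * 4) => F i)]
  rw [Fintype.sum_prod_type]
  have : ∀ (a : Fin k) (b : Fin 4),
      F ((finProdFinEquiv (a, b) : Fin (k * 4)) : ℕ) = F b := by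
    intro a b
    have hv : ((finProdFinEquiv (a, b) : Fin (k * 4)) : ℕ) = b + 4 * a := by
      simp [finProdFinEquiv]
    rw [hv, ← hF ((b : ℕ) + 4 * (a : ℕ))]
    have : ((b : ℕ) + 4 * (a : ℕ)) % 4 = (b : ℕ) := by omega
    rw [this]
  simp_rw [this]
  rw [Finset.sum_const, Finset.card_univ, Fintype.card_fin, nsmul_eq_mul]

theorem stmt_2 (n : ℕ) (hn : 0 < n) :
    (∃ v₁ v₂ v₃ : Fin n → ℝ,
      (∀ i, v₁ i = 1 ∨ v₁ i = -1) ∧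
      (∀ i, v₂ i = 1 ∨ v₂ i = -1) ∧
      (∀ i, v₃ i = 1 ∨ v₃ i = -1) ∧
      (∑ i, v₁ i * v₂ i = 0) ∧
      (∑ i, v₁ i * v₃ i = 0) ∧
      (∑ i, v₂ i * v₃ i = 0)) ↔ 4 ∣ n := by
  classical
  constructor
  · rintro ⟨v₁, v₂, v₃, h1, h2, h3, h12, h13, h23⟩
    set S := Finset.univ.filter (fun i => v₁ i * v₂ i = 1 ∧ v₁ i * v₃ i = 1) with hS
    have key : ∀ i, (1 + v₁ i * v₂ i) * (1 + v₁ i * v₃ i) =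
        if v₁ i * v₂ i = 1 ∧ v₁ i * v₃ i = 1 then (4 : ℝ) else 0 := by
      intro i
      rcases h1 i with e1 | e1 <;> rcases h2 i with e2 | e2 <;> rcases h3 i with e3 | e3 <;>
        simp [e1, e2, e3] <;> norm_num
    have expand : ∀ i, (1 + v₁ i * v₂ i) * (1 + v₁ i * v₃ i) =
        1 + v₁ i * v₂ i + v₁ i * v₃ i + v₂ i * v₃ i := by
      intro i; rcases h1 i with e | e <;> rw [e] <;> ring
    have hsum : ∑ i, (1 + v₁ i * v₂ i) * (1 + v₁ i * v₃ i) = (n : ℝ) := by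
      simp_rw [expand]
      rw [Finset.sum_add_distrib, Finset.sum_add_distrib, Finset.sum_add_distrib,
        h12, h13, h23]
      simp
    have hsum2 : ∑ i, (1 + v₁ i * v₂ i) * (1 + v₁ i * v₃ i) = 4 * S.card := by
      simp_rw [key]
      rw [Finset.sum_ite, Finset.sum_const, Finset.sum_const]
      simp [hS, mul_comm]
    have hcast : (n : ℝ) = ((4 * S.card : ℕ) : ℝ) := by
      rw [← hsum, hsum2]; push_cast; ring
    exact ⟨S.card, Nat.cast_injective hcast⟩
  · rintro ⟨k, hk⟩
    have hk' : n = k * 4 := by omega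
    subst hk'
    set f2 : ℕ → ℝ := fun x => if x % 4 < 2 then 1 else -1 with hf2
    set f3 : ℕ → ℝ := fun x => if x % 2 = 0 then 1 else -1 with hf3
    refine ⟨fun _ => 1, fun i => f2 i, fun i => f3 i, fun i => Or.inl rfl,
      fun i => ?_, fun i => ?_, ?_, ?_, ?_⟩
    · simp only [hf2]; split <;> simp
    · simp only [hf3]; split <;> simp
    · have h2 : ∀ x, f2 (x % 4) = f2 x := by
        intro x; simp only [hf2, Nat.mod_mod_of_dvd _ (dvd_refl 4)]
      have := sum_period4 k f2 h2
      simp only [one_mul]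
      rw [this]
      norm_num [hf2]
    · have h3 : ∀ x, f3 (x % 4) = f3 x := by
        intro x
        simp only [hf3]
        have : x % 4 % 2 = x % 2 := Nat.mod_mod_of_dvd x (by norm_num)
        rw [this]
      have := sum_period4 k f3 h3
      simp only [one_mul]
      rw [this]
      norm_num [hf3]
    · have hp : ∀ x, (f2 (x % 4)) * (f3 (x % 4)) = (f2 x) * (f3 x) := by
        intro x
        have e2 : f2 (x % 4) = f2 x := by
          simp only [hf2, Nat.mod_mod_of_dvd _ (dvd_refl 4)]
        have e3 : f3 (x % 4) = f3 x := by
          simp only [hf3]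
          have : x % 4 % 2 = x % 2 := Nat.mod_mod_of_dvd x (by norm_num)
          rw [this]
        rw [e2, e3]
      have := sum_period4 k (fun x => f2 x * f3 x) hp
      rw [this]
      norm_num [hf2, hf3]
end

section
/- Let M be a k×k real symmetric positive semidefinite matrix with all diagonal entries equal to n and all off-diagonal entries integers ≥ 1, and suppose M ≠ (n-1)I + J. Then λ_max(M) > n + k - 1. -/
/-!
Entrywise, `M` dominates `N = (n - 1) • 1 + J`, and strictly so somewhere since `M ≠ N`; hence the
sum of the entries of `M`, which is the Rayleigh quotient numerator `𝟙ᵀ M 𝟙`, exceeds that of `N`,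
namely `k (n + k - 1)`. Dividing by `𝟙ᵀ 𝟙 = k` and bounding the Rayleigh quotient by the largest
eigenvalue gives the claim.
-/

open Matrix Finset
open scoped MatrixOrder

variable {ι : Type*} [Fintype ι]

theorem Matrix.IsHermitian.dotProduct_mulVec_le_sup'_eigenvalues [DecidableEq ι]
    {A : Matrix ι ι ℝ} (hA : A.IsHermitian) (h : (univ : Finset ι).Nonempty) (x : ι → ℝ) :
    x ⬝ᵥ A *ᵥ x ≤ univ.sup' h hA.eigenvalues * (x ⬝ᵥ x) := by
  have hle : A ≤ algebraMap ℝ _ (univ.sup' h hA.eigenvalues) := by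
    rw [le_algebraMap_iff_spectrum_le hA.isSelfAdjoint, hA.spectrum_real_eq_range_eigenvalues]
    rintro _ ⟨i, rfl⟩
    exact le_sup' _ (mem_univ i)
  simpa [sub_mulVec, Algebra.algebraMap_eq_smul_one, dotProduct_sub, smul_mulVec,
    dotProduct_smul] using (Matrix.le_iff.mp hle).dotProduct_mulVec_nonneg x

theorem Matrix.one_dotProduct_mulVec_one {R : Type*} [NonAssocSemiring R] (A : Matrix ι ι R) :
    1 ⬝ᵥ A *ᵥ 1 = ∑ i, ∑ j, A i j := by
  simp [mulVec, dotProduct]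

theorem Matrix.sum_sum_lt_sum_sum {m n R : Type*} [Fintype m] [Fintype n] [AddCommMonoid R]
    [PartialOrder R] [IsOrderedCancelAddMonoid R] {A B : Matrix m n R}
    (hle : ∀ i j, A i j ≤ B i j) (hne : A ≠ B) : ∑ i, ∑ j, A i j < ∑ i, ∑ j, B i j := by
  obtain ⟨i, j, hij⟩ : ∃ i j, A i j ≠ B i j := by
    by_contra! h
    exact hne (Matrix.ext h)
  refine sum_lt_sum (fun i _ => sum_le_sum fun j _ => hle i j) ⟨i, mem_univ i, ?_⟩
  exact sum_lt_sum (fun j _ => hle i j) ⟨j, mem_univ j, (hle i j).lt_of_ne hij⟩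

theorem Matrix.sum_sum_smul_one_add_of_one [DecidableEq ι] {R : Type*} [CommRing R] (c : R) :
    ∑ i, ∑ j, (c • 1 + of fun _ _ => 1 : Matrix ι ι R) i j =
      Fintype.card ι * (c + Fintype.card ι) := by
  simp [Matrix.one_apply, Finset.sum_add_distrib, mul_add]

theorem stmt_6 (k n : ℕ) (hk : 2 ≤ k)
    (M : Matrix (Fin k) (Fin k) ℝ) (hM : M.PosSemidef)
    (hdiag : ∀ i, M i i = (n : ℝ))
    (hoff : ∀ i j, i ≠ j → ∃ z : ℤ, 1 ≤ z ∧ M i j = (z : ℝ))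
    (hne : M ≠ ((n : ℝ) - 1) • (1 : Matrix (Fin k) (Fin k) ℝ)
        + Matrix.of (fun _ _ => (1 : ℝ))) :
    (n : ℝ) + (k : ℝ) - 1 <
      Finset.univ.sup' ⟨⟨0, by omega⟩, Finset.mem_univ _⟩ hM.1.eigenvalues := by
  set N : Matrix (Fin k) (Fin k) ℝ := ((n : ℝ) - 1) • 1 + of fun _ _ => 1
  have hNM : ∀ i j, N i j ≤ M i j := by
    intro i j
    rcases eq_or_ne i j with rfl | hij
    · simp [N, hdiag]
    · obtain ⟨z, hz, hMz⟩ := hoff i j hij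
      simpa [N, hij, hMz] using (Int.cast_le (R := ℝ)).2 hz
  have hsum : (k : ℝ) * (n + k - 1) < ∑ i, ∑ j, M i j :=
    calc (k : ℝ) * (n + k - 1) = ∑ i, ∑ j, N i j := by
          rw [sum_sum_smul_one_add_of_one, Fintype.card_fin]; ring
      _ < ∑ i, ∑ j, M i j := sum_sum_lt_sum_sum hNM hne.symm
  have hrayleigh := hM.1.dotProduct_mulVec_le_sup'_eigenvalues ⟨⟨0, by omega⟩, mem_univ _⟩ 1
  rw [one_dotProduct_mulVec_one, one_dotProduct_one, Fintype.card_fin] at hrayleigh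
  exact lt_of_mul_lt_mul_left (by linarith) (Nat.cast_nonneg k)
end

section
/- Let C be an n×n real symmetric conference matrix (symmetric, zero diagonal, ±1 off-diagonal, CᵀC = (n-1)I) with n ≥ 2. Then the condition number of C + I equals (√(n-1) + 1)/(√(n-1) - 1), i.e., σ_max(C+I)/σ_min(C+I) = (√(n-1)+1)/(√(n-1)-1). -/
/-!
As `C` is symmetric with `C² = (n - 1) I`, the Gram matrix `(C + I)ᵀ (C + I) = n I + 2 C` has
every eigenvalue `μ` satisfying `(μ - n)² = 4 (n - 1)`, i.e. `μ = (√(n - 1) ± 1)²`. Since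
`tr C = 0`, the eigenvalues average to `n`, so both values occur and they are the extreme ones.
-/

open Matrix

namespace Finset

variable {ι : Type*} {s : Finset ι} {f : ι → ℝ} {a d : ℝ}

theorem sup'_eq_add_of_sum_eq_card_smul (hs : s.Nonempty) (hd : 0 ≤ d)
    (hf : ∀ i ∈ s, f i = a + d ∨ f i = a - d) (hsum : ∑ i ∈ s, f i = s.card • a) :
    s.sup' hs f = a + d := by
  obtain ⟨j, hj, hle⟩ : ∃ j ∈ s, a ≤ f j :=
    exists_le_of_sum_le hs (by rw [hsum, sum_const])
  refine le_antisymm (sup'_le hs f fun i hi => ?_) (le_sup'_of_le f hj ?_)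
  · rcases hf i hi with h | h <;> linarith
  · rcases hf j hj with h | h <;> linarith

theorem inf'_eq_sub_of_sum_eq_card_smul (hs : s.Nonempty) (hd : 0 ≤ d)
    (hf : ∀ i ∈ s, f i = a + d ∨ f i = a - d) (hsum : ∑ i ∈ s, f i = s.card • a) :
    s.inf' hs f = a - d := by
  obtain ⟨j, hj, hle⟩ : ∃ j ∈ s, f j ≤ a :=
    exists_le_of_sum_le hs (by rw [hsum, sum_const])
  refine le_antisymm (inf'_le_of_le f hj ?_) (le_inf' hs f fun i hi => ?_)
  · rcases hf j hj with h | h <;> linarith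
  · rcases hf i hi with h | h <;> linarith

end Finset

namespace Matrix

variable {ι 𝕜 : Type*} [Fintype ι] [DecidableEq ι] [RCLike 𝕜]

theorem IsHermitian.eigenvalues_sub_sq_eq {A : Matrix ι ι 𝕜} (hA : A.IsHermitian) {a b : ℝ}
    (h : (A - a • 1) * (A - a • 1) = b • 1) (i : ι) :
    (hA.eigenvalues i - a) ^ 2 = b := by
  set v := ⇑(hA.eigenvectorBasis i)
  have hv : (A - a • 1) *ᵥ v = (hA.eigenvalues i - a) • v := by
    rw [sub_mulVec, hA.mulVec_eigenvectorBasis, smul_mulVec, one_mulVec, sub_smul]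
  have hv0 : v ≠ 0 := by
    simpa [v] using hA.eigenvectorBasis.orthonormal.ne_zero i
  have := congrArg (· *ᵥ v) h
  simp only [← mulVec_mulVec, hv, mulVec_smul, smul_smul, smul_mulVec, one_mulVec] at this
  rw [sq]
  exact smul_left_injective ℝ hv0 this

variable {C : Matrix ι ι ℝ} {c : ℝ}

theorem conjTranspose_add_one_mul_add_one (hsym : Cᵀ = C) (hC : Cᵀ * C = c • 1) :
    (C + 1)ᴴ * (C + 1) = (c + 1) • 1 + (2 : ℝ) • C := by
  rw [conjTranspose_eq_transpose_of_trivial, transpose_add, transpose_one, add_mul, mul_add,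
    mul_add, hC, hsym, mul_one, one_mul, mul_one, add_smul, one_smul]
  module

theorem eigenvalues_conjTranspose_add_one_mul_add_one (hsym : Cᵀ = C) (hC : Cᵀ * C = c • 1)
    (hc : 0 ≤ c) (i : ι) :
    (isHermitian_conjTranspose_mul_self (C + 1)).eigenvalues i = c + 1 + 2 * √c ∨
      (isHermitian_conjTranspose_mul_self (C + 1)).eigenvalues i = c + 1 - 2 * √c := by
  have hshift : ((C + 1)ᴴ * (C + 1) - (c + 1) • 1) * ((C + 1)ᴴ * (C + 1) - (c + 1) • 1) =
      (2 * √c) ^ 2 • 1 := by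
    rw [conjTranspose_add_one_mul_add_one hsym hC, add_sub_cancel_left, smul_mul_smul_comm]
    nth_rewrite 1 [← hsym]
    rw [hC, mul_pow, Real.sq_sqrt hc, smul_smul]
    norm_num
  rcases sq_eq_sq_iff_eq_or_eq_neg.mp
    ((isHermitian_conjTranspose_mul_self (C + 1)).eigenvalues_sub_sq_eq hshift i) with h | h
  · exact .inl (by linarith)
  · exact .inr (by linarith)

theorem sum_eigenvalues_conjTranspose_add_one_mul_add_one (hsym : Cᵀ = C)
    (hC : Cᵀ * C = c • 1) (htr : C.trace = 0) :
    ∑ i, (isHermitian_conjTranspose_mul_self (C + 1)).eigenvalues i =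
      (Finset.univ : Finset ι).card • (c + 1) := by
  calc _ = ((C + 1)ᴴ * (C + 1)).trace :=
        (isHermitian_conjTranspose_mul_self (C + 1)).trace_eq_sum_eigenvalues.symm
    _ = _ := by
        rw [conjTranspose_add_one_mul_add_one hsym hC, trace_add, trace_smul, trace_smul,
          trace_one, htr, smul_zero, add_zero, Finset.card_univ, smul_eq_mul, nsmul_eq_mul,
          mul_comm]

end Matrix

set_option maxHeartbeats 1000000 in
theorem stmt_9 (n : ℕ) (hn : 3 ≤ n)
    (C : Matrix (Fin n) (Fin n) ℝ)
    (hsym : Cᵀ = C)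
    (hdiag : ∀ i, C i i = 0)
    (hconf : Cᵀ * C = ((n : ℝ) - 1) • (1 : Matrix (Fin n) (Fin n) ℝ)) :
    Real.sqrt (Finset.univ.sup' ⟨⟨0, by omega⟩, Finset.mem_univ _⟩
        (Matrix.isHermitian_conjTranspose_mul_self (C + 1)).eigenvalues) /
      Real.sqrt (Finset.univ.inf' ⟨⟨0, by omega⟩, Finset.mem_univ _⟩
        (Matrix.isHermitian_conjTranspose_mul_self (C + 1)).eigenvalues)
    = (Real.sqrt ((n : ℝ) - 1) + 1) / (Real.sqrt ((n : ℝ) - 1) - 1) := by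
  have hn' : (3 : ℝ) ≤ n := by exact_mod_cast hn
  have hc : (0 : ℝ) ≤ n - 1 := by linarith
  have hs1 : 1 < √((n : ℝ) - 1) := Real.lt_sqrt_of_sq_lt (by linarith)
  have htwo := fun i (_ : i ∈ Finset.univ) =>
    eigenvalues_conjTranspose_add_one_mul_add_one hsym hconf hc i
  have hsum := sum_eigenvalues_conjTranspose_add_one_mul_add_one hsym hconf
    (Finset.sum_eq_zero fun i _ => hdiag i)
  calc _ = √((√((n : ℝ) - 1) + 1) ^ 2) / √((√((n : ℝ) - 1) - 1) ^ 2) := by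
        congr 2
        · exact (Finset.sup'_eq_add_of_sum_eq_card_smul _ (by positivity) htwo hsum).trans
            (by linear_combination -Real.sq_sqrt hc)
        · exact (Finset.inf'_eq_sub_of_sum_eq_card_smul _ (by positivity) htwo hsum).trans
            (by linear_combination -Real.sq_sqrt hc)
    _ = _ := by rw [Real.sqrt_sq (by linarith), Real.sqrt_sq (by linarith)]
end

section
/- Let n be even and let R, S be (n/2)×(n/2) real circulant matrices with RᵀR + SᵀS = (n-2)I + 2J. Then the block matrix A = [[R, S],[Sᵀ, -Rᵀ]] satisfies AᵀA = I₂ ⊗ ((n-2)I + 2J). -/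
open Matrix

theorem stmt_11 (m n : ℕ) (hm : 0 < m) (hnm : n = 2 * m)
    (R S : Matrix (Fin m) (Fin m) ℝ)
    (hR : ∃ r : Fin m → ℝ, R = Matrix.circulant r)
    (hS : ∃ s : Fin m → ℝ, S = Matrix.circulant s)
    (hRS : Rᵀ * R + Sᵀ * S
      = ((n : ℝ) - 2) • (1 : Matrix (Fin m) (Fin m) ℝ)
        + (2 : ℝ) • Matrix.of (fun _ _ => (1 : ℝ))) :
    (Matrix.fromBlocks R S Sᵀ (-Rᵀ))ᵀ * Matrix.fromBlocks R S Sᵀ (-Rᵀ)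
      = Matrix.fromBlocks
          (((n : ℝ) - 2) • (1 : Matrix (Fin m) (Fin m) ℝ)
            + (2 : ℝ) • Matrix.of (fun _ _ => (1 : ℝ))) 0 0
          (((n : ℝ) - 2) • (1 : Matrix (Fin m) (Fin m) ℝ)
            + (2 : ℝ) • Matrix.of (fun _ _ => (1 : ℝ))) := by
  obtain ⟨r, rfl⟩ := hR
  obtain ⟨s, rfl⟩ := hS
  have hc := fun (v w : Fin m → ℝ) => Matrix.Fin.circulant_mul_comm v w
  simp only [Fin.transpose_circulant] at hRS ⊢
  rw [fromBlocks_transpose, fromBlocks_multiply]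
  simp only [transpose_neg, Matrix.neg_mul, Matrix.mul_neg, neg_neg,
    Fin.transpose_circulant]
  rw [fromBlocks_inj]
  refine ⟨?_, ?_, ?_, ?_⟩
  · rw [hc s (fun i => s (-i))]; exact hRS
  · rw [hc (fun i => r (-i)) (fun i => s i), add_neg_cancel]
  · rw [hc (fun i => s (-i)) (fun i => r i)]
    rw [hc (fun i => r i) (fun i => s (-i)), add_neg_cancel]
  · rw [add_comm, hc (fun i => r i) (fun i => r (-i))]
    exact hRS
end

section
/- Let H be an m×m Hadamard matrix and 1 ≤ k < √m. Write (1/√m)H = [[A,B],[C,D]] with A of size k×k. Then I - A is invertible and every entry of the orthogonal matrix M := D + C(I-A)⁻¹B satisfies |M_{ij}| ≤ 1/(√m - k). -/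
/-!
Every entry of the blocks has absolute value `1/√m`. In the `ℓ∞` operator norm (maximal absolute
row sum) this gives `‖A‖ ≤ k/√m < 1`, so `1 - A` is invertible, and `X = (1 - A)⁻¹ = 1 + X A`
gives `‖X‖ ≤ (1 - k/√m)⁻¹`. An entry of `C X B` pairs a row of `C` (`k` entries of size `1/√m`)
with `X` applied to a column of `B` (sup norm `1/√m`), so it is at most `k/m · (1 - k/√m)⁻¹`;
adding `|D i j| = 1/√m` gives exactly `1/(√m - k)`.
-/

open Matrix

attribute [local instance] Matrix.linftyOpNormedAddCommGroup Matrix.linftyOpNormedRing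

theorem norm_le_inv_one_sub_of_mul_one_sub_eq_one {R : Type*} [NormedRing R]
    (h1 : ‖(1 : R)‖ ≤ 1) {x a : R} {r : ℝ} (hx : x * (1 - a) = 1) (ha : ‖a‖ ≤ r) (hr : r < 1) :
    ‖x‖ ≤ (1 - r)⁻¹ := by
  have hxa : x = 1 + x * a := by rwa [mul_sub, mul_one, sub_eq_iff_eq_add] at hx
  have : ‖x‖ ≤ 1 + ‖x‖ * r :=
    calc ‖x‖ = ‖1 + x * a‖ := congrArg norm hxa
      _ ≤ ‖(1 : R)‖ + ‖x‖ * ‖a‖ := (norm_add_le _ _).trans (add_le_add_right (norm_mul_le _ _) _)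
      _ ≤ 1 + ‖x‖ * r := by gcongr
  rw [← one_div, le_div_iff₀ (sub_pos.2 hr)]
  linarith

namespace Matrix

variable {ι κ μ ν : Type*}

theorem abs_smul_apply_of_sign {H : Matrix ι κ ℝ} (hH : ∀ i j, H i j = 1 ∨ H i j = -1)
    {c : ℝ} (hc : 0 ≤ c) (i : ι) (j : κ) : |(c • H) i j| = c := by
  rcases hH i j with h | h <;> simp [h, abs_of_nonneg hc]

theorem linfty_opNorm_le_card_mul [Fintype ι] [Fintype κ] {A : Matrix ι κ ℝ} {c : ℝ}
    (hc : 0 ≤ c) (hA : ∀ i j, |A i j| ≤ c) : ‖A‖ ≤ Fintype.card κ * c := by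
  lift c to NNReal using hc
  have hsup : (Finset.univ.sup fun i => ∑ j, ‖A i j‖₊) ≤ Fintype.card κ * c :=
    Finset.sup_le fun i _ =>
      (Finset.sum_le_sum fun j _ => show ‖A i j‖₊ ≤ c from hA i j).trans_eq <| by
        rw [Finset.sum_const, Finset.card_univ, nsmul_eq_mul]
  rw [linfty_opNorm_def]
  exact_mod_cast hsup

theorem linfty_opNorm_one_le [Fintype κ] [DecidableEq κ] : ‖(1 : Matrix κ κ ℝ)‖ ≤ 1 := by
  rw [← diagonal_one, linfty_opNorm_diagonal]
  exact (pi_norm_le_iff_of_nonneg zero_le_one).2 fun _ => by simp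

theorem isUnit_one_sub_of_linfty_opNorm_lt_one [Fintype κ] [DecidableEq κ]
    {A : Matrix κ κ ℝ} (hA : ‖A‖ < 1) : IsUnit (1 - A) :=
  letI : NormedSpace ℝ (Matrix κ κ ℝ) := Matrix.linftyOpNormedSpace
  haveI : CompleteSpace (Matrix κ κ ℝ) := FiniteDimensional.complete ℝ _
  isUnit_one_sub_of_norm_lt_one hA

theorem abs_mul_mul_apply_le [Fintype κ] [Fintype μ] (C : Matrix ι κ ℝ) (X : Matrix κ μ ℝ)
    (B : Matrix μ ν ℝ) {c b : ℝ} (hC : ∀ i p, |C i p| ≤ c) (hb : 0 ≤ b)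
    (hB : ∀ q j, |B q j| ≤ b) (i : ι) (j : ν) :
    |(C * X * B) i j| ≤ Fintype.card κ * c * (‖X‖ * b) := by
  have hv : ‖X *ᵥ fun q => B q j‖ ≤ ‖X‖ * b :=
    (linfty_opNorm_mulVec _ _).trans <| by
      gcongr; exact (pi_norm_le_iff_of_nonneg hb).2 fun q => hB q j
  rw [Matrix.mul_assoc, mul_apply]
  calc |∑ p, C i p * (X * B) p j| ≤ ∑ p, |C i p| * |(X * B) p j| := by
        simpa only [abs_mul] using Finset.abs_sum_le_sum_abs (fun p => C i p * (X * B) p j) _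
    _ ≤ ∑ _p : κ, c * (‖X‖ * b) := by
        gcongr with p
        · exact (abs_nonneg _).trans (hC i p)
        · exact hC i p
        · exact (norm_le_pi_norm _ p).trans hv
    _ = _ := by simp [mul_assoc]

end Matrix

theorem stmt_15_general (k l m : ℕ)
    (hksqrt : (k : ℝ) < Real.sqrt m)
    (H : Matrix (Fin k ⊕ Fin l) (Fin k ⊕ Fin l) ℝ)
    (hpm : ∀ i j, H i j = 1 ∨ H i j = -1)
    (A : Matrix (Fin k) (Fin k) ℝ) (B : Matrix (Fin k) (Fin l) ℝ)
    (C : Matrix (Fin l) (Fin k) ℝ) (D : Matrix (Fin l) (Fin l) ℝ)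
    (hA : A = ((1 : ℝ) / Real.sqrt m) • Matrix.toBlocks₁₁ H)
    (hB : B = ((1 : ℝ) / Real.sqrt m) • Matrix.toBlocks₁₂ H)
    (hC : C = ((1 : ℝ) / Real.sqrt m) • Matrix.toBlocks₂₁ H)
    (hD : D = ((1 : ℝ) / Real.sqrt m) • Matrix.toBlocks₂₂ H) :
    IsUnit (1 - A) ∧
    ∀ i j, |(D + C * (1 - A)⁻¹ * B) i j| ≤ 1 / (Real.sqrt m - k) := by
  set s := Real.sqrt m
  have hsk : 0 < s - k := sub_pos.2 hksqrt
  have hs : 0 < s := hsk.trans_le (sub_le_self _ k.cast_nonneg)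
  have hc : 0 ≤ 1 / s := by positivity
  have hAe : ∀ p q, |A p q| ≤ 1 / s := fun p q =>
    hA ▸ (abs_smul_apply_of_sign (fun _ _ => hpm _ _) hc p q).le
  have hBe : ∀ p q, |B p q| ≤ 1 / s := fun p q =>
    hB ▸ (abs_smul_apply_of_sign (fun _ _ => hpm _ _) hc p q).le
  have hCe : ∀ p q, |C p q| ≤ 1 / s := fun p q =>
    hC ▸ (abs_smul_apply_of_sign (fun _ _ => hpm _ _) hc p q).le
  have hDe : ∀ p q, |D p q| ≤ 1 / s := fun p q =>
    hD ▸ (abs_smul_apply_of_sign (fun _ _ => hpm _ _) hc p q).le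
  have hnA : ‖A‖ ≤ k / s :=
    (linfty_opNorm_le_card_mul hc hAe).trans_eq (by rw [Fintype.card_fin, mul_one_div])
  have hr : (k : ℝ) / s < 1 := (div_lt_one hs).2 hksqrt
  have hunit := isUnit_one_sub_of_linfty_opNorm_lt_one (hnA.trans_lt hr)
  refine ⟨hunit, fun i j => ?_⟩
  have hX : ‖(1 - A)⁻¹‖ ≤ (1 - k / s)⁻¹ :=
    norm_le_inv_one_sub_of_mul_one_sub_eq_one linfty_opNorm_one_le
      (nonsing_inv_mul _ ((isUnit_iff_isUnit_det _).1 hunit)) hnA hr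
  calc |(D + C * (1 - A)⁻¹ * B) i j| ≤ |D i j| + |(C * (1 - A)⁻¹ * B) i j| := abs_add_le _ _
    _ ≤ 1 / s + k * (1 / s) * ((1 - k / s)⁻¹ * (1 / s)) := by
        gcongr
        · exact hDe i j
        · refine (abs_mul_mul_apply_le _ _ _ hCe hc hBe i j).trans ?_
          gcongr
          exact (Fintype.card_fin k).le
    _ = 1 / (s - k) := by field_simp; ring

theorem stmt_15 (k l m : ℕ) (hm : m = k + l) (hk : 0 < k)
    (hksqrt : (k : ℝ) < Real.sqrt m)
    (H : Matrix (Fin k ⊕ Fin l) (Fin k ⊕ Fin l) ℝ)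
    (hpm : ∀ i j, H i j = 1 ∨ H i j = -1)
    (hHad : Hᵀ * H = (m : ℝ) • (1 : Matrix (Fin k ⊕ Fin l) (Fin k ⊕ Fin l) ℝ))
    (A : Matrix (Fin k) (Fin k) ℝ) (B : Matrix (Fin k) (Fin l) ℝ)
    (C : Matrix (Fin l) (Fin k) ℝ) (D : Matrix (Fin l) (Fin l) ℝ)
    (hA : A = ((1 : ℝ) / Real.sqrt m) • Matrix.toBlocks₁₁ H)
    (hB : B = ((1 : ℝ) / Real.sqrt m) • Matrix.toBlocks₁₂ H)
    (hC : C = ((1 : ℝ) / Real.sqrt m) • Matrix.toBlocks₂₁ H)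
    (hD : D = ((1 : ℝ) / Real.sqrt m) • Matrix.toBlocks₂₂ H) :
    IsUnit (1 - A) ∧
    ∀ i j, |(D + C * (1 - A)⁻¹ * B) i j| ≤ 1 / (Real.sqrt m - k) :=
  stmt_15_general k l m hksqrt H hpm A B C D hA hB hC hD
end
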